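/- Fix n ≥ 1 and permutations v, w in S_n. If v ≤ w in Bruhat order, then σ_v(w) ≠ 0 (computed from any reduced word for w); that is, the positive terms in Billey's formula cannot cancel and the sum is a nonzero polynomial. -/

import Mathlib

open Equiv MvPolynomial

/-- The adjacent transposition `s_i = (i, i+1)` in `S_n` (defined to be `1` if `i+1 ≥ n`). -/
def simpleRefl (n : ℕ) (i : ℕ) : Equiv.Perm (Fin n) :=
  if h : i + 1 < n then Equiv.swap ⟨i, Nat.lt_of_succ_lt h⟩ ⟨i + 1, h⟩ else 1

/-- A word is a list of indices `i` with `i + 1 < n` (0-indexed version of `1 ≤ i ≤ n-1`). -/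
def IsWord (n : ℕ) (l : List ℕ) : Prop := ∀ b ∈ l, b + 1 < n

/-- The product `s_{b_1} ⋯ s_{b_m}` of the simple reflections of a word. -/
def wordProd (n : ℕ) (l : List ℕ) : Equiv.Perm (Fin n) := (l.map (simpleRefl n)).prod

/-- `l` is a reduced word for `w`: its product is `w` and no shorter word has product `w`. -/
def IsReducedWord (n : ℕ) (w : Equiv.Perm (Fin n)) (l : List ℕ) : Prop :=
  IsWord n l ∧ wordProd n l = w ∧
    ∀ l' : List ℕ, IsWord n l' → wordProd n l' = w → l.length ≤ l'.length

/-- The Coxeter length `ℓ(w)`: the length of any reduced word for `w`. -/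
noncomputable def coxLen (n : ℕ) (w : Equiv.Perm (Fin n)) : ℕ :=
  sInf {m | ∃ l : List ℕ, IsWord n l ∧ wordProd n l = w ∧ l.length = m}

/-- Bruhat order: the partial order generated by `v < t * v` whenever `t` is a
transposition and `ℓ(v) < ℓ(t * v)`. -/
def BruhatLE (n : ℕ) : Equiv.Perm (Fin n) → Equiv.Perm (Fin n) → Prop :=
  Relation.ReflTransGen fun x y =>
    (∃ t : Equiv.Perm (Fin n), t.IsSwap ∧ y = t * x) ∧ coxLen n x < coxLen n y

/-- The simple root `α_i = t_i - t_{i+1}` in `ℤ[t_1, …, t_n]` (defined as `0` if `i+1 ≥ n`). -/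
noncomputable def simpleRoot (n : ℕ) (i : ℕ) : MvPolynomial (Fin n) ℤ :=
  if h : i + 1 < n then X ⟨i, Nat.lt_of_succ_lt h⟩ - X ⟨i + 1, h⟩ else 0

/-- The root `r_j = (s_{b_1} ⋯ s_{b_{j-1}}) · α_{b_j}` associated to position `j` of a word,
where `S_n` acts on polynomials by permuting variables. -/
noncomputable def wordRoot (n : ℕ) (l : List ℕ) (j : Fin l.length) : MvPolynomial (Fin n) ℤ :=
  rename (⇑(wordProd n (l.take j))) (simpleRoot n (l.get j))

open scoped Classical in
/-- Billey's formula `σ_v(w)`, computed from the reduced word `l` of `w`: the sum over all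
index sequences `j_1 < ⋯ < j_k` such that `(b_{j_1}, …, b_{j_k})` is a reduced word for `v`,
of the products `r_{j_1} ⋯ r_{j_k}`. -/
noncomputable def billey (n : ℕ) (v : Equiv.Perm (Fin n)) (l : List ℕ) :
    MvPolynomial (Fin n) ℤ :=
  ∑ J : Finset (Fin l.length),
    if IsReducedWord n v ((J.sort (· ≤ ·)).map l.get) then ∏ j ∈ J, wordRoot n l j else 0

/-!
Evaluate at `t_i = -i`. The root `r_j` of a reduced word `b_1 ⋯ b_m` of `w` becomes
`u(b_j + 1) - u(b_j)` with `u = s_{b_1} ⋯ s_{b_{j-1}}`, which is positive because appending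
`s_{b_j}` to `u` raises the number of inversions. So every term of Billey's sum evaluates to a
nonnegative integer, and it suffices that one term is present, i.e. that some subword of
`b_1 ⋯ b_m` is a reduced word for `v`. This is the subword property of the Bruhat order, which
follows from the strong exchange condition once the length is identified with the number of
inversions.
-/

namespace Equiv.Perm

variable {α : Type*} [LinearOrder α]

lemma swap_lt_swap_of_covBy {a b p q : α} (hab : a ⋖ b) (hpq : p < q) (hne : (p, q) ≠ (a, b)) :
    swap a b p < swap a b q := by
  have hp := @hab.2 p
  have hq := @hab.2 q
  simp only [swap_apply_def, ne_eq, Prod.mk.injEq] at hne ⊢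
  grind [hab.1]

variable [Fintype α]

def inversions (u : Perm α) : Finset (α × α) := {p | p.1 < p.2 ∧ u p.2 < u p.1}

def numInversions (u : Perm α) : ℕ := u.inversions.card

@[simp] lemma mem_inversions {u : Perm α} {p : α × α} :
    p ∈ u.inversions ↔ p.1 < p.2 ∧ u p.2 < u p.1 := by
  simp [inversions]

@[simp] lemma numInversions_one : (1 : Perm α).numInversions = 0 := by
  simp only [numInversions, Finset.card_eq_zero, Finset.eq_empty_iff_forall_notMem,
    mem_inversions, one_apply]
  exact fun p h => h.1.asymm h.2

lemma lt_numInversions_mul_swap {u : Perm α} {a b : α} (hab : a < b) (hu : u a < u b) :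
    u.numInversions < (u * swap a b).numInversions := by
  -- `ψ` moves a pair across `{a, b}` exactly when its other entry has a `u`-value between
  -- `u a` and `u b`; it is an involution sending inversions of `u` to inversions of `u * swap a b`.
  let between (x : α) : Prop := u a < x ∧ x < u b
  let ψ : α × α → α × α := fun p =>
    (if between (u p.2) then swap a b p.1 else p.1, if between (u p.1) then swap a b p.2 else p.2)
  have hψ : Function.Involutive ψ := by
    rintro ⟨p, q⟩
    simp only [ψ, between, swap_apply_def]
    grind [apply_eq_iff_eq]
  have hmaps : Set.MapsTo ψ u.inversions ((u * swap a b).inversions.erase (a, b)) := by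
    rintro ⟨p, q⟩ hpq
    simp only [Finset.mem_coe, mem_inversions, Finset.mem_erase, ψ, between, mul_apply,
      swap_apply_def] at hpq ⊢
    grind [apply_eq_iff_eq]
  have hab_mem : (a, b) ∈ (u * swap a b).inversions := by simp [hab, hu]
  calc u.numInversions ≤ ((u * swap a b).inversions.erase (a, b)).card :=
        Finset.card_le_card_of_injOn ψ hmaps hψ.injective.injOn
    _ < (u * swap a b).numInversions := Finset.card_erase_lt_of_mem hab_mem

lemma numInversions_mul_swap_lt {u : Perm α} {a b : α} (hab : a < b) (hu : u b < u a) :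
    (u * swap a b).numInversions < u.numInversions := by
  simpa [mul_assoc] using lt_numInversions_mul_swap (u := u * swap a b) hab (by simpa using hu)

lemma numInversions_mul_swap_le_of_covBy (u : Perm α) {a b : α} (hab : a ⋖ b) :
    (u * swap a b).numInversions ≤ u.numInversions + 1 := by
  have hmaps : Set.MapsTo (Prod.map (swap a b) (swap a b))
      ((u * swap a b).inversions.erase (a, b)) u.inversions := by
    rintro ⟨p, q⟩ hpq
    simp only [Finset.mem_coe, Finset.mem_erase, mem_inversions, mul_apply] at hpq
    exact mem_inversions.2 ⟨swap_lt_swap_of_covBy hab hpq.2.1 hpq.1, hpq.2.2⟩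
  have hinj : Function.Injective (Prod.map (swap a b) (swap a b)) :=
    (swap a b).injective.prodMap (swap a b).injective
  have := Finset.card_le_card_of_injOn _ hmaps hinj.injOn
  have := Finset.pred_card_le_card_erase (s := (u * swap a b).inversions) (a := (a, b))
  unfold numInversions
  omega

lemma eq_one_of_strictMono {u : Perm α} (hu : StrictMono u) : u = 1 := by
  have : ⇑u = id := (hu.range_inj strictMono_id).1 (by simp [u.surjective.range_eq])
  exact Equiv.ext (congrFun this)

end Equiv.Perm

open Perm

section

variable {n : ℕ}

lemma simpleRefl_of_lt {i : ℕ} (h : i + 1 < n) :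
    simpleRefl n i = swap ⟨i, by omega⟩ ⟨i + 1, h⟩ :=
  dif_pos h

lemma simpleRefl_of_not_lt {i : ℕ} (h : ¬i + 1 < n) : simpleRefl n i = 1 :=
  dif_neg h

lemma Fin.mk_covBy_mk_add_one {i : ℕ} (h : i + 1 < n) :
    (⟨i, by omega⟩ : Fin n) ⋖ ⟨i + 1, h⟩ :=
  Fin.covBy_iff.2 (Order.covBy_add_one i)

@[simp] lemma simpleRefl_mul_self (i : ℕ) : simpleRefl n i * simpleRefl n i = 1 := by
  by_cases h : i + 1 < n
  · simp [simpleRefl_of_lt h]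
  · simp [simpleRefl_of_not_lt h]

@[simp] lemma simpleRefl_inv (i : ℕ) : (simpleRefl n i)⁻¹ = simpleRefl n i :=
  inv_eq_of_mul_eq_one_left (simpleRefl_mul_self i)

lemma simpleRefl_lt_simpleRefl {i : ℕ} {p q : Fin n} (hpq : p < q)
    (hne : ¬((p : ℕ) = i ∧ (q : ℕ) = i + 1)) : simpleRefl n i p < simpleRefl n i q := by
  by_cases h : i + 1 < n
  · rw [simpleRefl_of_lt h]
    exact swap_lt_swap_of_covBy (Fin.mk_covBy_mk_add_one h) hpq (by simpa [Fin.ext_iff] using hne)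
  · simpa [simpleRefl_of_not_lt h] using hpq

lemma numInversions_mul_simpleRefl_le (u : Perm (Fin n)) (i : ℕ) :
    (u * simpleRefl n i).numInversions ≤ u.numInversions + 1 := by
  by_cases h : i + 1 < n
  · rw [simpleRefl_of_lt h]
    exact u.numInversions_mul_swap_le_of_covBy (Fin.mk_covBy_mk_add_one h)
  · simp [simpleRefl_of_not_lt h]

lemma exists_descent_of_ne_one {u : Perm (Fin n)} (hu : u ≠ 1) :
    ∃ (i : ℕ) (h : i + 1 < n), u ⟨i + 1, h⟩ < u ⟨i, by omega⟩ := by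
  cases n with
  | zero => exact absurd (Subsingleton.elim u 1) hu
  | succ m =>
    by_contra! hasc
    refine hu (eq_one_of_strictMono (Fin.strictMono_iff_lt_succ.2 fun i => ?_))
    exact (hasc i (by omega)).lt_of_ne (u.injective.ne (by simp [Fin.ext_iff]))

@[simp] lemma wordProd_nil : wordProd n [] = 1 := rfl

@[simp] lemma wordProd_cons (i : ℕ) (l : List ℕ) :
    wordProd n (i :: l) = simpleRefl n i * wordProd n l := by
  simp [wordProd]

@[simp] lemma wordProd_append (l l' : List ℕ) :
    wordProd n (l ++ l') = wordProd n l * wordProd n l' := by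
  simp [wordProd]

lemma IsWord.sublist {l l' : List ℕ} (hl : IsWord n l) (h : l'.Sublist l) : IsWord n l' :=
  fun b hb => hl b (h.subset hb)

lemma numInversions_mul_wordProd_le (u : Perm (Fin n)) (l : List ℕ) :
    (u * wordProd n l).numInversions ≤ u.numInversions + l.length := by
  induction l generalizing u with
  | nil => simp
  | cons i l ih =>
    have := numInversions_mul_simpleRefl_le u i
    have := ih (u * simpleRefl n i)
    rw [wordProd_cons, ← mul_assoc, List.length_cons]
    omega

lemma numInversions_wordProd_le (l : List ℕ) : (wordProd n l).numInversions ≤ l.length := by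
  simpa using numInversions_mul_wordProd_le 1 l

lemma exists_word_length_le (u : Perm (Fin n)) :
    ∃ l, IsWord n l ∧ wordProd n l = u ∧ l.length ≤ u.numInversions := by
  induction hk : u.numInversions using Nat.strong_induction_on generalizing u with
  | _ k ih =>
  by_cases hu : u = 1
  · exact ⟨[], fun _ => by simp, hu.symm, by simp⟩
  obtain ⟨i, hi, hdesc⟩ := exists_descent_of_ne_one hu
  have hlt : (u * simpleRefl n i).numInversions < k :=
    hk ▸ simpleRefl_of_lt hi ▸ numInversions_mul_swap_lt (Fin.mk_lt_mk.2 i.lt_succ_self) hdesc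
  obtain ⟨l, hl, hprod, hlen⟩ := ih _ hlt _ rfl
  refine ⟨l ++ [i], ?_, by simp [hprod, mul_assoc], ?_⟩
  · simpa [IsWord, or_imp, forall_and] using ⟨hl, hi⟩
  · simp only [List.length_append, List.length_singleton]
    omega

lemma coxLen_eq_numInversions (u : Perm (Fin n)) : coxLen n u = u.numInversions := by
  obtain ⟨l, hl, hprod, hlen⟩ := exists_word_length_le u
  unfold coxLen
  apply le_antisymm
  · exact (Nat.sInf_le (by exact ⟨l, hl, hprod, rfl⟩)).trans hlen
  · refine le_csInf ⟨l.length, l, hl, hprod, rfl⟩ ?_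
    rintro _ ⟨l', -, rfl, rfl⟩
    exact numInversions_wordProd_le l'

lemma isReducedWord_iff {w : Perm (Fin n)} {l : List ℕ} :
    IsReducedWord n w l ↔ IsWord n l ∧ wordProd n l = w ∧ l.length = w.numInversions := by
  refine and_congr_right fun _ => and_congr_right fun hprod => ⟨fun hmin => ?_, fun hlen => ?_⟩
  · obtain ⟨l', hl', hprod', hlen'⟩ := exists_word_length_le w
    exact le_antisymm ((hmin l' hl' hprod').trans hlen') (hprod ▸ numInversions_wordProd_le l)
  · rintro l' - rfl
    exact hlen ▸ numInversions_wordProd_le l'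

lemma numInversions_wordProd_take {w : Perm (Fin n)} {l : List ℕ} (hl : IsReducedWord n w l)
    {j : ℕ} (hj : j ≤ l.length) : (wordProd n (l.take j)).numInversions = j := by
  obtain ⟨-, hprod, hlen⟩ := isReducedWord_iff.1 hl
  have hsplit := numInversions_mul_wordProd_le (wordProd n (l.take j)) (l.drop j)
  rw [← wordProd_append, List.take_append_drop, hprod, List.length_drop] at hsplit
  have := numInversions_wordProd_le (n := n) (l.take j)
  rw [List.length_take] at this
  omega

lemma wordProd_take_lt {w : Perm (Fin n)} {l : List ℕ} (hl : IsReducedWord n w l)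
    {j : ℕ} (hj : j < l.length) (hb : l[j] + 1 < n) :
    wordProd n (l.take j) ⟨l[j], by omega⟩ < wordProd n (l.take j) ⟨l[j] + 1, hb⟩ := by
  set u := wordProd n (l.take j)
  have hnext : (u * simpleRefl n l[j]).numInversions = j + 1 := by
    rw [← numInversions_wordProd_take hl (show j + 1 ≤ l.length from hj),
      ← List.take_concat_get' l j hj, wordProd_append, wordProd_cons, wordProd_nil, mul_one]
  refine lt_of_not_ge fun hge => ?_
  have hlt := numInversions_mul_swap_lt (u := u) (Fin.mk_lt_mk.2 (l[j]).lt_succ_self)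
    (hge.lt_of_ne (u.injective.ne (by simp [Fin.ext_iff])))
  rw [← simpleRefl_of_lt hb, hnext, numInversions_wordProd_take hl hj.le] at hlt
  omega

lemma exists_eraseIdx_of_lt_of_inv_lt (l : List ℕ) {x y : Fin n} (hxy : x < y)
    (hinv : (wordProd n l)⁻¹ y < (wordProd n l)⁻¹ x) :
    ∃ j < l.length, swap x y * wordProd n l = wordProd n (l.eraseIdx j) := by
  -- Peeling off the first letter `s_b` conjugates `swap x y` into `swap (s_b x) (s_b y)`,
  -- which keeps the pair in increasing order unless `swap x y = s_b` itself.
  induction l generalizing x y with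
  | nil => exact absurd hxy (by simpa using hinv.le)
  | cons b l ih =>
    by_cases hxy_b : (x : ℕ) = b ∧ (y : ℕ) = b + 1
    · have hs : swap x y = simpleRefl n b := by
        rw [simpleRefl_of_lt (hxy_b.2 ▸ y.isLt)]
        congr <;> ext <;> simp [hxy_b]
      exact ⟨0, by simp, by simp [hs, ← mul_assoc]⟩
    · simp only [wordProd_cons, mul_inv_rev, simpleRefl_inv, mul_apply] at hinv
      obtain ⟨j, hj, hprod⟩ := ih (simpleRefl_lt_simpleRefl hxy hxy_b) hinv
      refine ⟨j + 1, by simpa using hj, ?_⟩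
      rw [List.eraseIdx_cons_succ, wordProd_cons, wordProd_cons, ← hprod, swap_apply_apply,
        simpleRefl_inv]
      simp only [← mul_assoc, simpleRefl_mul_self, one_mul]

lemma exists_eraseIdx_of_numInversions_lt (l : List ℕ) {t : Perm (Fin n)} (ht : t.IsSwap)
    (hlt : (t * wordProd n l).numInversions < (wordProd n l).numInversions) :
    ∃ j < l.length, t * wordProd n l = wordProd n (l.eraseIdx j) := by
  obtain ⟨x, y, hne, rfl⟩ := ht
  wlog hxy : x < y generalizing x y
  · simpa [swap_comm] using this y x hne.symm (by rwa [swap_comm]) (hne.lt_or_gt.resolve_left hxy)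
  set u := wordProd n l
  refine exists_eraseIdx_of_lt_of_inv_lt l hxy (lt_of_not_ge fun hle => hlt.not_ge ?_)
  have hlt' : u⁻¹ x < u⁻¹ y := hle.lt_of_ne (u⁻¹.injective.ne hne)
  rw [swap_mul_eq_mul_swap]
  exact (lt_numInversions_mul_swap hlt' (by simpa using hxy)).le

lemma exists_sublist_wordProd_eq (l : List ℕ) :
    ∃ l', l'.Sublist l ∧ wordProd n l' = wordProd n l ∧
      l'.length ≤ (wordProd n l).numInversions := by
  induction l using List.reverseRecOn with
  | nil => exact ⟨[], List.Sublist.refl _, rfl, by simp⟩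
  | append_singleton l b ih =>
    obtain ⟨l', hsub, hprod, hlen⟩ := ih
    have hsub' : l'.Sublist (l ++ [b]) := hsub.trans (List.sublist_append_left l [b])
    rw [wordProd_append, wordProd_cons, wordProd_nil, mul_one]
    set u := wordProd n l
    by_cases hb : b + 1 < n
    swap
    · rw [simpleRefl_of_not_lt hb, mul_one]
      exact ⟨l', hsub', hprod, hlen⟩
    have hab : (⟨b, by omega⟩ : Fin n) < ⟨b + 1, hb⟩ := Fin.mk_lt_mk.2 b.lt_succ_self
    rcases (u.injective.ne hab.ne).lt_or_gt with hasc | hdesc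
    · refine ⟨l' ++ [b], hsub.append (List.Sublist.refl _), by simp [hprod, u], ?_⟩
      have := lt_numInversions_mul_swap hab hasc
      rw [← simpleRefl_of_lt hb] at this
      simp only [List.length_append, List.length_singleton]
      omega
    · have hswap : swap (u ⟨b, by omega⟩) (u ⟨b + 1, hb⟩) * u = u * simpleRefl n b := by
        rw [swap_apply_apply, simpleRefl_of_lt hb, inv_mul_cancel_right]
      have hlt := numInversions_mul_swap_lt hab hdesc
      rw [← simpleRefl_of_lt hb, ← hswap] at hlt
      obtain ⟨j, hj, hj_prod⟩ := exists_eraseIdx_of_numInversions_lt l'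
        (swap_isSwap_iff.2 (u.injective.ne hab.ne)) (by rwa [hprod])
      refine ⟨l'.eraseIdx j, (l'.eraseIdx_sublist j).trans hsub',
        by rw [← hj_prod, hprod, hswap], ?_⟩
      have := numInversions_mul_simpleRefl_le (u * simpleRefl n b) b
      rw [mul_assoc, simpleRefl_mul_self, mul_one] at this
      rw [List.length_eraseIdx_of_lt hj]
      omega

lemma IsWord.exists_sublist_isReducedWord {l : List ℕ} (hl : IsWord n l) :
    ∃ l', l'.Sublist l ∧ IsReducedWord n (wordProd n l) l' := by
  obtain ⟨l', hsub, hprod, hlen⟩ := exists_sublist_wordProd_eq l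
  refine ⟨l', hsub, isReducedWord_iff.2 ⟨hl.sublist hsub, hprod, ?_⟩⟩
  exact le_antisymm hlen (hprod ▸ numInversions_wordProd_le l')

lemma BruhatLE.exists_sublist_isReducedWord {v w : Perm (Fin n)} (hvw : BruhatLE n v w)
    {l : List ℕ} (hl : IsReducedWord n w l) : ∃ l', l'.Sublist l ∧ IsReducedWord n v l' := by
  induction hvw generalizing l with
  | refl => exact ⟨l, List.Sublist.refl l, hl⟩
  | @tail b c _ hstep ih =>
    obtain ⟨⟨t, ht, hc⟩, hlen⟩ := hstep
    rw [coxLen_eq_numInversions, coxLen_eq_numInversions] at hlen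
    have htt : t * t = 1 := by obtain ⟨x, y, -, rfl⟩ := ht; exact swap_mul_self x y
    have hb : t * wordProd n l = b := by rw [hl.2.1, hc, ← mul_assoc, htt, one_mul]
    obtain ⟨j, -, hj⟩ := exists_eraseIdx_of_numInversions_lt l ht (by rwa [hb, hl.2.1])
    obtain ⟨l₁, hsub₁, hred₁⟩ :=
      (hl.1.sublist (l.eraseIdx_sublist j)).exists_sublist_isReducedWord
    rw [← hj, hb] at hred₁
    obtain ⟨l₂, hsub₂, hred₂⟩ := ih hred₁
    exact ⟨l₂, hsub₂.trans (hsub₁.trans (l.eraseIdx_sublist j)), hred₂⟩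

lemma List.exists_finset_sort_map_get_eq {α : Type*} {l l' : List α} (h : l'.Sublist l) :
    ∃ J : Finset (Fin l.length), (J.sort (· ≤ ·)).map l.get = l' := by
  obtain ⟨is, rfl, his⟩ := List.sublist_eq_map_getElem h
  refine ⟨is.toFinset, ?_⟩
  rw [(List.toFinset_sort (· ≤ ·) (his.imp ne_of_lt)).2 (his.imp le_of_lt)]
  rfl

lemma eval_wordRoot_pos {w : Perm (Fin n)} {l : List ℕ} (hl : IsReducedWord n w l)
    (j : Fin l.length) : 0 < eval (fun i : Fin n => -(i : ℤ)) (wordRoot n l j) := by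
  have hb : l[(j : ℕ)] + 1 < n := hl.1 _ (List.getElem_mem _)
  have := wordProd_take_lt hl j.isLt hb
  rw [Fin.lt_def] at this
  simp only [wordRoot, simpleRoot, List.get_eq_getElem]
  rw [dif_pos hb]
  simp only [map_sub, rename_X, eval_X]
  omega

lemma eval_billey_pos {v w : Perm (Fin n)} {l : List ℕ} (hl : IsReducedWord n w l)
    {J : Finset (Fin l.length)} (hJ : IsReducedWord n v ((J.sort (· ≤ ·)).map l.get)) :
    0 < eval (fun i : Fin n => -(i : ℤ)) (billey n v l) := by
  rw [billey, map_sum]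
  refine Finset.sum_pos' (fun K _ => ?_) ⟨J, Finset.mem_univ _, ?_⟩
  · split_ifs
    · rw [map_prod]
      exact Finset.prod_nonneg fun j _ => (eval_wordRoot_pos hl j).le
    · simp
  · rw [if_pos hJ, map_prod]
    exact Finset.prod_pos fun j _ => eval_wordRoot_pos hl j

end

theorem billey_stmt_9_general (n : ℕ) (v w : Equiv.Perm (Fin n))
    (hvw : BruhatLE n v w) (l : List ℕ) (hl : IsReducedWord n w l) :
    billey n v l ≠ 0 := by
  obtain ⟨l', hsub, hred⟩ := hvw.exists_sublist_isReducedWord hl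
  obtain ⟨J, rfl⟩ := List.exists_finset_sort_map_get_eq hsub
  intro h
  simpa [h] using eval_billey_pos hl hred

/-- If `v ≤ w` in Bruhat order, then `σ_v(w) ≠ 0`, computed from any
reduced word for `w`. -/
theorem billey_stmt_9 (n : ℕ) (hn : 1 ≤ n) (v w : Equiv.Perm (Fin n))
    (hvw : BruhatLE n v w) (l : List ℕ) (hl : IsReducedWord n w l) :
    billey n v l ≠ 0 :=
  billey_stmt_9_general n v w hvw l hl
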